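/- If the DLAL_B judgment ;⊢ t : §ⁿBool is derivable (t closed, n ∈ ℕ) and t is in normal form for δβ-reduction, then t = T or t = F. -/
import Mathlib


namespace DLALB

/-! ## DLAL_B types -/

inductive Ty where
  | tvar : ℕ → Ty
  | lolli : Ty → Ty → Ty      -- A ⊸ B
  | arr : Ty → Ty → Ty        -- A ⇒ B
  | para : Ty → Ty            -- §A
  | all : ℕ → Ty → Ty         -- ∀α.A
  | bool : Ty
deriving DecidableEq

def Ty.fv : Ty → Finset ℕ
  | .tvar a => {a}
  | .lolli A B => A.fv ∪ B.fv
  | .arr A B => A.fv ∪ B.fv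
  | .para A => A.fv
  | .all a A => A.fv \ {a}
  | .bool => ∅

/-- Type substitution A[B/α]. -/
def Ty.substTy : Ty → ℕ → Ty → Ty
  | .tvar b, a, B => if b = a then B else .tvar b
  | .lolli A C, a, B => .lolli (A.substTy a B) (C.substTy a B)
  | .arr A C, a, B => .arr (A.substTy a B) (C.substTy a B)
  | .para A, a, B => .para (A.substTy a B)
  | .all b A, a, B => if b = a then .all b A else .all b (A.substTy a B)
  | .bool, _, _ => .bool

/-- §ⁿA -/
def paraN : ℕ → Ty → Ty
  | 0, A => A
  | n+1, A => .para (paraN n A)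

/-! ## Terms of Λ_B -/

inductive Tm where
  | var : ℕ → Tm
  | tt : Tm                    -- T
  | ff : Tm                    -- F
  | lam : ℕ → Tm → Tm
  | app : Tm → Tm → Tm
  | ite : Tm → Tm → Tm → Tm    -- if _ then _ else _
deriving DecidableEq

def Tm.fv : Tm → Finset ℕ
  | .var x => {x}
  | .tt => ∅
  | .ff => ∅
  | .lam x t => t.fv \ {x}
  | .app t u => t.fv ∪ u.fv
  | .ite a b c => a.fv ∪ b.fv ∪ c.fv

/-- Substitution t[u/x]. -/
def Tm.subst : Tm → ℕ → Tm → Tm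
  | .var y, x, u => if y = x then u else .var y
  | .tt, _, _ => .tt
  | .ff, _, _ => .ff
  | .lam y t, x, u => if y = x then .lam y t else .lam y (t.subst x u)
  | .app t s, x, u => .app (t.subst x u) (s.subst x u)
  | .ite a b c, x, u => .ite (a.subst x u) (b.subst x u) (c.subst x u)

/-- Size of a term. -/
def Tm.size : Tm → ℕ
  | .var _ => 1
  | .tt => 1
  | .ff => 1
  | .lam _ t => t.size + 1
  | .app t u => t.size + u.size + 1
  | .ite a b c => a.size + b.size + c.size + 1

/-- Number of occurrences no(x,t) (with max over the branches of an if). -/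
def noOcc (x : ℕ) : Tm → ℕ
  | .var y => if y = x then 1 else 0
  | .tt => 0
  | .ff => 0
  | .lam _ t => noOcc x t
  | .app t u => noOcc x t + noOcc x u
  | .ite a b c => max (noOcc x a) (max (noOcc x b) (noOcc x c))

/-! ## Contexts -/

abbrev Ctx := List (ℕ × Ty)

def ctxDom (Γ : Ctx) : Finset ℕ := (Γ.map Prod.fst).toFinset

def ctxTyFV (Γ : Ctx) : Finset ℕ := Γ.foldr (fun p s => p.2.fv ∪ s) ∅

/-- §Δ -/
def paraCtx (Γ : Ctx) : Ctx := Γ.map (fun p => (p.1, Ty.para p.2))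

/-! ## DLAL_B typing, with the depth of the derivation recorded.
The depth is the maximal number of (§ i) premises and r.h.s. (⇒ e) premises
in a branch of the derivation. -/

inductive DerD : Ctx → Ctx → Tm → Ty → ℕ → Prop
  | id (x : ℕ) (A : Ty) : DerD [] [(x, A)] (.var x) A 0
  | lolliI {Γ Δ : Ctx} {x : ℕ} {A B : Ty} {t : Tm} {d : ℕ} :
      DerD Γ ((x, A) :: Δ) t B d → DerD Γ Δ (.lam x t) (.lolli A B) d
  | lolliE {Γ₁ Γ₂ Δ₁ Δ₂ : Ctx} {A B : Ty} {t u : Tm} {d₁ d₂ : ℕ} :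
      DerD Γ₁ Δ₁ t (.lolli A B) d₁ → DerD Γ₂ Δ₂ u A d₂ →
      DerD (Γ₁ ++ Γ₂) (Δ₁ ++ Δ₂) (.app t u) B (max d₁ d₂)
  | arrI {Γ Δ : Ctx} {x : ℕ} {A B : Ty} {t : Tm} {d : ℕ} :
      DerD ((x, A) :: Γ) Δ t B d → DerD Γ Δ (.lam x t) (.arr A B) d
  | arrE {Γ Δ : Ctx} {z : ℕ} {A B C : Ty} {t u : Tm} {d₁ d₂ : ℕ} :
      DerD Γ Δ t (.arr A B) d₁ → DerD [] [(z, C)] u A d₂ →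
      DerD ((z, C) :: Γ) Δ (.app t u) B (max d₁ (d₂ + 1))
  | arrE' {Γ Δ : Ctx} {A B : Ty} {t u : Tm} {d₁ d₂ : ℕ} :
      DerD Γ Δ t (.arr A B) d₁ → DerD [] [] u A d₂ →
      DerD Γ Δ (.app t u) B (max d₁ (d₂ + 1))
  | weak {Γ₁ Γ₂ Δ₁ Δ₂ : Ctx} {A : Ty} {t : Tm} {d : ℕ} :
      DerD Γ₁ Δ₁ t A d → DerD (Γ₁ ++ Γ₂) (Δ₁ ++ Δ₂) t A d
  | cntr {Γ Δ : Ctx} {x x₁ x₂ : ℕ} {A B : Ty} {t : Tm} {d : ℕ} :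
      DerD ((x₁, A) :: (x₂, A) :: Γ) Δ t B d →
      DerD ((x, A) :: Γ) Δ ((t.subst x₁ (.var x)).subst x₂ (.var x)) B d
  | paraI {Γ Δ : Ctx} {A : Ty} {t : Tm} {d : ℕ} :
      DerD [] (Γ ++ Δ) t A d → DerD Γ (paraCtx Δ) t (.para A) (d + 1)
  | paraE {Γ₁ Γ₂ Δ₁ Δ₂ : Ctx} {x : ℕ} {A B : Ty} {t u : Tm} {d₁ d₂ : ℕ} :
      DerD Γ₁ Δ₁ u (.para A) d₁ → DerD Γ₂ ((x, .para A) :: Δ₂) t B d₂ →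
      DerD (Γ₁ ++ Γ₂) (Δ₁ ++ Δ₂) (t.subst x u) B (max d₁ d₂)
  | allI {Γ Δ : Ctx} {a : ℕ} {A : Ty} {t : Tm} {d : ℕ} :
      DerD Γ Δ t A d → a ∉ ctxTyFV Γ ∪ ctxTyFV Δ → DerD Γ Δ t (.all a A) d
  | allE {Γ Δ : Ctx} {a : ℕ} {A B : Ty} {t : Tm} {d : ℕ} :
      DerD Γ Δ t (.all a A) d → DerD Γ Δ t (A.substTy a B) d
  | bF : DerD [] [] .ff .bool 0
  | bT : DerD [] [] .tt .bool 0
  | bE {Γ Δ : Ctx} {A : Ty} {M₀ M₁ M₂ : Tm} {n d₀ d₁ d₂ : ℕ} :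
      DerD Γ Δ M₀ (paraN n .bool) d₀ → DerD Γ Δ M₁ A d₁ → DerD Γ Δ M₂ A d₂ →
      DerD Γ Δ (.ite M₀ M₁ M₂) A (max d₀ (max d₁ d₂))

/-- Γ;Δ ⊢ t:A is derivable. -/
def Der (Γ Δ : Ctx) (t : Tm) (A : Ty) : Prop := ∃ d, DerD Γ Δ t A d

/-! ## Reductions -/

/-- One step of δβ-reduction (contextual closure of β and δ). -/
inductive Step : Tm → Tm → Prop
  | beta {x : ℕ} {t u : Tm} : Step (.app (.lam x t) u) (t.subst x u)
  | ifT {u v : Tm} : Step (.ite .tt u v) u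
  | ifF {u v : Tm} : Step (.ite .ff u v) v
  | lamC {x : ℕ} {t t' : Tm} : Step t t' → Step (.lam x t) (.lam x t')
  | appL {t t' u : Tm} : Step t t' → Step (.app t u) (.app t' u)
  | appR {t u u' : Tm} : Step u u' → Step (.app t u) (.app t u')
  | ite0 {a a' b c : Tm} : Step a a' → Step (.ite a b c) (.ite a' b c)
  | ite1 {a b b' c : Tm} : Step b b' → Step (.ite a b c) (.ite a b' c)
  | ite2 {a b c c' : Tm} : Step c c' → Step (.ite a b c) (.ite a b c')

/-- One step of β-reduction alone. -/
inductive StepB : Tm → Tm → Prop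
  | beta {x : ℕ} {t u : Tm} : StepB (.app (.lam x t) u) (t.subst x u)
  | lamC {x : ℕ} {t t' : Tm} : StepB t t' → StepB (.lam x t) (.lam x t')
  | appL {t t' u : Tm} : StepB t t' → StepB (.app t u) (.app t' u)
  | appR {t u u' : Tm} : StepB u u' → StepB (.app t u) (.app t u')
  | ite0 {a a' b c : Tm} : StepB a a' → StepB (.ite a b c) (.ite a' b c)
  | ite1 {a b b' c : Tm} : StepB b b' → StepB (.ite a b c) (.ite a b' c)
  | ite2 {a b c c' : Tm} : StepB c c' → StepB (.ite a b c) (.ite a b c')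

/-- One hole contexts. -/
inductive Cx where
  | hole : Cx
  | lam : ℕ → Cx → Cx
  | appL : Cx → Tm → Cx
  | appR : Tm → Cx → Cx
  | ite0 : Cx → Tm → Tm → Cx
  | ite1 : Tm → Cx → Tm → Cx
  | ite2 : Tm → Tm → Cx → Cx

def Cx.fill : Cx → Tm → Tm
  | .hole, s => s
  | .lam x C, s => .lam x (C.fill s)
  | .appL C u, s => .app (C.fill s) u
  | .appR t C, s => .app t (C.fill s)
  | .ite0 C b c, s => .ite (C.fill s) b c
  | .ite1 a C c, s => .ite a (C.fill s) c
  | .ite2 a b C, s => .ite a b (C.fill s)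

/-- One step of δ̄-reduction. -/
inductive DBar : Tm → Tm → Prop
  | toCond {C : Cx} {t₀ t₁ t₂ : Tm} :
      t₀.fv = ∅ → DBar (C.fill (.ite t₀ t₁ t₂)) t₀
  | toThen {C : Cx} {t₀ t₁ t₂ : Tm} :
      t₀.fv = ∅ → DBar (C.fill (.ite t₀ t₁ t₂)) (C.fill t₁)
  | toElse {C : Cx} {t₀ t₁ t₂ : Tm} :
      t₀.fv = ∅ → DBar (C.fill (.ite t₀ t₁ t₂)) (C.fill t₂)

/-! ## Pure λ-terms and System F -/

inductive Lam where
  | var : ℕ → Lam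
  | lam : ℕ → Lam → Lam
  | app : Lam → Lam → Lam
deriving DecidableEq

def Lam.subst : Lam → ℕ → Lam → Lam
  | .var y, x, u => if y = x then u else .var y
  | .lam y t, x, u => if y = x then .lam y t else .lam y (t.subst x u)
  | .app t s, x, u => .app (t.subst x u) (s.subst x u)

/-- β-reduction on pure λ-terms. -/
inductive LamStep : Lam → Lam → Prop
  | beta {x : ℕ} {t u : Lam} : LamStep (.app (.lam x t) u) (t.subst x u)
  | lamC {x : ℕ} {t t' : Lam} : LamStep t t' → LamStep (.lam x t) (.lam x t')
  | appL {t t' u : Lam} : LamStep t t' → LamStep (.app t u) (.app t' u)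
  | appR {t u u' : Lam} : LamStep u u' → LamStep (.app t u) (.app t u')

inductive FTy where
  | tvar : ℕ → FTy
  | arr : FTy → FTy → FTy
  | all : ℕ → FTy → FTy
deriving DecidableEq

def FTy.fv : FTy → Finset ℕ
  | .tvar a => {a}
  | .arr A B => A.fv ∪ B.fv
  | .all a A => A.fv \ {a}

def FTy.substTy : FTy → ℕ → FTy → FTy
  | .tvar b, a, B => if b = a then B else .tvar b
  | .arr A C, a, B => .arr (A.substTy a B) (C.substTy a B)
  | .all b A, a, B => if b = a then .all b A else .all b (A.substTy a B)

abbrev FCtx := List (ℕ × FTy)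

def fctxTyFV (Γ : FCtx) : Finset ℕ := Γ.foldr (fun p s => p.2.fv ∪ s) ∅

/-- Curry-style System F typing. -/
inductive FDer : FCtx → Lam → FTy → Prop
  | var {Γ : FCtx} {x : ℕ} {A : FTy} : (x, A) ∈ Γ → FDer Γ (.var x) A
  | lam {Γ : FCtx} {x : ℕ} {A B : FTy} {t : Lam} :
      FDer ((x, A) :: Γ) t B → FDer Γ (.lam x t) (.arr A B)
  | app {Γ : FCtx} {A B : FTy} {t u : Lam} :
      FDer Γ t (.arr A B) → FDer Γ u A → FDer Γ (.app t u) B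
  | allI {Γ : FCtx} {a : ℕ} {A : FTy} {t : Lam} :
      FDer Γ t A → a ∉ fctxTyFV Γ → FDer Γ t (.all a A)
  | allE {Γ : FCtx} {a : ℕ} {A B : FTy} {t : Lam} :
      FDer Γ t (.all a A) → FDer Γ t (A.substTy a B)

/-! ## The translation (·)* into System F -/

def Ty.star : Ty → FTy
  | .tvar a => .tvar a
  | .lolli A B => .arr A.star B.star
  | .arr A B => .arr A.star B.star
  | .para A => A.star
  | .all a A => .all a A.star
  | .bool => .all 0 (.arr (.tvar 0) (.arr (.tvar 0) (.tvar 0)))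

def Tm.star : Tm → Lam
  | .var x => .var x
  | .ff => .lam 0 (.lam 1 (.var 1))
  | .tt => .lam 0 (.lam 1 (.var 0))
  | .lam x t => .lam x t.star
  | .app t u => .app t.star u.star
  | .ite a b c => .app (.app a.star b.star) c.star

def ctxStar (Γ : Ctx) : FCtx := Γ.map (fun p => (p.1, p.2.star))

/-! ## Stratified terms -/

inductive STm where
  | var : ℕ → STm
  | tt : STm
  | ff : STm
  /-- `lam x k bang t` is λᵏx.t, or λ^{k!}x.t when `bang = true`. -/
  | lam : ℕ → ℕ → Bool → STm → STm
  /-- `app bang t u` is t u, or t ! u when `bang = true`. -/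
  | app : Bool → STm → STm → STm
  | ite : STm → STm → STm → STm
deriving DecidableEq

def STm.fv : STm → Finset ℕ
  | .var x => {x}
  | .tt => ∅
  | .ff => ∅
  | .lam x _ _ t => t.fv \ {x}
  | .app _ t u => t.fv ∪ u.fv
  | .ite a b c => a.fv ∪ b.fv ∪ c.fv

def STm.subst : STm → ℕ → STm → STm
  | .var y, x, u => if y = x then u else .var y
  | .tt, _, _ => .tt
  | .ff, _, _ => .ff
  | .lam y k bg t, x, u => if y = x then .lam y k bg t else .lam y k bg (t.subst x u)
  | .app bg t s, x, u => .app bg (t.subst x u) (s.subst x u)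
  | .ite a b c, x, u => .ite (a.subst x u) (b.subst x u) (c.subst x u)

/-- t[+1] : all abstraction depths increased by 1. -/
def STm.shift : STm → STm
  | .var x => .var x
  | .tt => .tt
  | .ff => .ff
  | .lam x k bg t => .lam x (k + 1) bg t.shift
  | .app bg t u => .app bg t.shift u.shift
  | .ite a b c => .ite a.shift b.shift c.shift

/-- Number of occurrences of a variable in a stratified term. -/
def noOccS (x : ℕ) : STm → ℕ
  | .var y => if y = x then 1 else 0
  | .tt => 0
  | .ff => 0
  | .lam _ _ _ t => noOccS x t
  | .app _ t u => noOccS x t + noOccS x u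
  | .ite a b c => max (noOccS x a) (max (noOccS x b) (noOccS x c))

/-- Number of occurrences of abstractions at depth k. -/
def noAtS (k : ℕ) : STm → ℕ
  | .var _ => 0
  | .tt => 0
  | .ff => 0
  | .lam _ p _ t => (if p = k then 1 else 0) + noAtS k t
  | .app _ t u => noAtS k t + noAtS k u
  | .ite a b c => max (noAtS k a) (max (noAtS k b) (noAtS k c))

/-- Number of occurrences of the if constructor. -/
def noIfS : STm → ℕ
  | .var _ => 0
  | .tt => 0
  | .ff => 0
  | .lam _ _ _ t => noIfS t
  | .app _ t u => noIfS t + noIfS u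
  | .ite a b c => max (noIfS a) (max (noIfS b) (noIfS c)) + 1

/-- Subterm relation on stratified terms. -/
inductive SSub : STm → STm → Prop
  | refl (t : STm) : SSub t t
  | lam {s t : STm} {x k : ℕ} {bg : Bool} : SSub s t → SSub s (.lam x k bg t)
  | appL {s t u : STm} {bg : Bool} : SSub s t → SSub s (.app bg t u)
  | appR {s t u : STm} {bg : Bool} : SSub s u → SSub s (.app bg t u)
  | ite0 {s a b c : STm} : SSub s a → SSub s (.ite a b c)
  | ite1 {s a b c : STm} : SSub s b → SSub s (.ite a b c)
  | ite2 {s a b c : STm} : SSub s c → SSub s (.ite a b c)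

/-- Stratified DLAL_B typing. -/
inductive SDer : Ctx → Ctx → STm → Ty → Prop
  | id (x : ℕ) (A : Ty) : SDer [] [(x, A)] (.var x) A
  | lolliI {Γ Δ : Ctx} {x : ℕ} {A B : Ty} {t : STm} :
      SDer Γ ((x, A) :: Δ) t B → SDer Γ Δ (.lam x 0 false t) (.lolli A B)
  | lolliE {Γ₁ Γ₂ Δ₁ Δ₂ : Ctx} {A B : Ty} {t u : STm} :
      SDer Γ₁ Δ₁ t (.lolli A B) → SDer Γ₂ Δ₂ u A →
      SDer (Γ₁ ++ Γ₂) (Δ₁ ++ Δ₂) (.app false t u) B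
  | arrI {Γ Δ : Ctx} {x : ℕ} {A B : Ty} {t : STm} :
      SDer ((x, A) :: Γ) Δ t B → SDer Γ Δ (.lam x 0 true t) (.arr A B)
  | arrE {Γ Δ : Ctx} {z : ℕ} {A B C : Ty} {t u : STm} :
      SDer Γ Δ t (.arr A B) → SDer [] [(z, C)] u A →
      SDer ((z, C) :: Γ) Δ (.app true t u.shift) B
  | arrE' {Γ Δ : Ctx} {A B : Ty} {t u : STm} :
      SDer Γ Δ t (.arr A B) → SDer [] [] u A →
      SDer Γ Δ (.app true t u.shift) B
  | weak {Γ₁ Γ₂ Δ₁ Δ₂ : Ctx} {A : Ty} {t : STm} :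
      SDer Γ₁ Δ₁ t A → SDer (Γ₁ ++ Γ₂) (Δ₁ ++ Δ₂) t A
  | cntr {Γ Δ : Ctx} {x x₁ x₂ : ℕ} {A B : Ty} {t : STm} :
      SDer ((x₁, A) :: (x₂, A) :: Γ) Δ t B →
      SDer ((x, A) :: Γ) Δ ((t.subst x₁ (.var x)).subst x₂ (.var x)) B
  | paraI {Γ Δ : Ctx} {A : Ty} {t : STm} :
      SDer [] (Γ ++ Δ) t A → SDer Γ (paraCtx Δ) t.shift (.para A)
  | paraE {Γ₁ Γ₂ Δ₁ Δ₂ : Ctx} {x : ℕ} {A B : Ty} {t u : STm} :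
      SDer Γ₁ Δ₁ u (.para A) → SDer Γ₂ ((x, .para A) :: Δ₂) t B →
      SDer (Γ₁ ++ Γ₂) (Δ₁ ++ Δ₂) (t.subst x u) B
  | allI {Γ Δ : Ctx} {a : ℕ} {A : Ty} {t : STm} :
      SDer Γ Δ t A → a ∉ ctxTyFV Γ ∪ ctxTyFV Δ → SDer Γ Δ t (.all a A)
  | allE {Γ Δ : Ctx} {a : ℕ} {A B : Ty} {t : STm} :
      SDer Γ Δ t (.all a A) → SDer Γ Δ t (A.substTy a B)
  | bF : SDer [] [] .ff .bool
  | bT : SDer [] [] .tt .bool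
  | bE {Γ Δ : Ctx} {A : Ty} {M₀ M₁ M₂ : STm} {n : ℕ} :
      SDer Γ Δ M₀ (paraN n .bool) → SDer Γ Δ M₁ A → SDer Γ Δ M₂ A →
      SDer Γ Δ (.ite M₀ M₁ M₂) A

/-! ## The measure.
`meas m r k a b` is measure_(k-1)(a, b) of the paper, for vectors of
dimension k+1 (so `meas m r (d+1)` is measure_(d) on vectors of dimension d+2,
and `meas m r 0` is measure_(-1) on vectors of dimension 1). -/

def meas (m r : ℕ) : (k : ℕ) → (Fin (k + 1) → ℤ) → (Fin (k + 1) → ℤ) → ℤ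
  | 0, a, _ => a 0
  | k + 1, a, b =>
      meas m r k
        (fun j => a j.succ + ((r : ℤ) + 1) * (b j.succ + a 0 * (m : ℤ)) * a 0)
        (fun j => b j.succ + a 0 * (m : ℤ))

/-- t_k(a,b). -/
def tVec (d m r k : ℕ) (a b : Fin (d + 2) → ℤ) : Fin (d + 2) → ℤ :=
  fun j => if (j : ℕ) < k then a j
           else if (j : ℕ) = k then a j - 1
           else a j + (r : ℤ) * (b j + (m : ℤ))

/-- u_k(a). -/
def uVec (d k : ℕ) (a : Fin (d + 2) → ℤ) : Fin (d + 2) → ℤ :=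
  fun j => if (j : ℕ) = k then a j - 1 else a j

/-- v_k(b). -/
def vVec (d m k : ℕ) (b : Fin (d + 2) → ℤ) : Fin (d + 2) → ℤ :=
  fun j => if (j : ℕ) ≤ k then b j else b j + (m : ℤ)

/-! ## The abstract alternating machine K_B -/

/-- A context 𝒜 of the machine: a list of assignments x := t. -/
abbrev Assoc := List (ℕ × Tm)

/-- N₀ N₁ ... N_p. -/
def appList (t : Tm) : List Tm → Tm
  | [] => t
  | u :: l => appList (.app t u) l

/-- `x` is a fresh variable w.r.t. the context `A` and the subject `t`. -/
def FreshFor (x : ℕ) (A : Assoc) (t : Tm) : Prop :=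
  x ∉ A.map Prod.fst ∧ (∀ p ∈ A, x ∉ (p.2 : Tm).fv) ∧ x ∉ t.fv

/-- Configurations; `true` stands for yes and `false` for no. -/
inductive Config where
  | accept : Config
  | reject : Config
  | ex : Assoc → Bool → Tm → Config
  | uni : Assoc → Bool → Tm → Bool → Tm → Config

/-- Transitions of the machine K_B. -/
inductive KStep : Config → Config → Prop
  | beta {A : Assoc} {b : Bool} {x x' : ℕ} {N N₁ : Tm} {rest : List Tm} :
      FreshFor x' A (appList (.app (.lam x N) N₁) rest) →
      KStep (.ex A b (appList (.app (.lam x N) N₁) rest))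
            (.ex (A ++ [(x', N₁)]) b (appList (N.subst x (.var x')) rest))
  | head {A₁ A₂ : Assoc} {b : Bool} {x : ℕ} {N : Tm} {args : List Tm} :
      KStep (.ex (A₁ ++ (x, N) :: A₂) b (appList (.var x) args))
            (.ex (A₁ ++ (x, N) :: A₂) b (appList N args))
  | ifYes {A : Assoc} {b : Bool} {M₀ M₁ M₂ : Tm} {args : List Tm} :
      KStep (.ex A b (appList (.ite M₀ M₁ M₂) args))
            (.uni A true M₀ b (appList M₁ args))
  | ifNo {A : Assoc} {b : Bool} {M₀ M₁ M₂ : Tm} {args : List Tm} :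
      KStep (.ex A b (appList (.ite M₀ M₁ M₂) args))
            (.uni A false M₀ b (appList M₂ args))
  | if'L {A : Assoc} {a b : Bool} {M₀ N : Tm} :
      KStep (.uni A a M₀ b N) (.ex A a M₀)
  | if'R {A : Assoc} {a b : Bool} {M₀ N : Tm} :
      KStep (.uni A a M₀ b N) (.ex A b N)
  | accT {A : Assoc} : KStep (.ex A true .tt) .accept
  | accF {A : Assoc} : KStep (.ex A false .ff) .accept
  | rejT {A : Assoc} : KStep (.ex A false .tt) .reject
  | rejF {A : Assoc} : KStep (.ex A true .ff) .reject

/-- Accepted configurations: Accepting is accepted; an existential configuration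
is accepted if some successor is accepted; a universal configuration is accepted
if both of its successors are accepted. -/
inductive Accepted : Config → Prop
  | accept : Accepted .accept
  | ex {A : Assoc} {b : Bool} {t : Tm} {c : Config} :
      KStep (.ex A b t) c → Accepted c → Accepted (.ex A b t)
  | uni {A : Assoc} {a b : Bool} {M₀ N : Tm} :
      Accepted (.ex A a M₀) → Accepted (.ex A b N) →
      Accepted (.uni A a M₀ b N)


/-! ## Auxiliary development for bool_normal_form -/

/-- The "spine class" of a type: 0 for bool-spines, 1 for arrow-spines,
2 for type-variable spines. -/
def cls : Ty → ℕ
  | .tvar _ => 2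
  | .lolli _ _ => 1
  | .arr _ _ => 1
  | .para A => cls A
  | .all _ A => cls A
  | .bool => 0

lemma cls_substTy {A : Ty} (a : ℕ) (B : Ty) (h : cls A ≠ 2) :
    cls (A.substTy a B) = cls A := by
  induction A with
  | tvar b => simp [cls] at h
  | lolli A C ihA ihC => simp [Ty.substTy, cls]
  | arr A C ihA ihC => simp [Ty.substTy, cls]
  | para A ih =>
      simp only [cls] at h
      simp [Ty.substTy, cls, ih h]
  | all b A ih =>
      simp only [cls] at h
      by_cases hb : b = a
      · simp [Ty.substTy, hb, cls]
      · simp [Ty.substTy, hb, cls, ih h]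
  | bool => simp [Ty.substTy, cls]

lemma cls_paraN (n : ℕ) : cls (paraN n .bool) = 0 := by
  induction n with
  | zero => rfl
  | succ n ih => simpa [paraN, cls] using ih

/-- normal form predicate -/
def NFt (t : Tm) : Prop := ∀ u, ¬ Step t u

lemma step_subst {t s : Tm} (h : Step t s) (x : ℕ) (u : Tm) :
    ∃ w, Step (t.subst x u) w := by
  induction h with
  | @beta y t' u' =>
      by_cases hy : y = x
      · simp only [Tm.subst, if_pos hy]; exact ⟨_, Step.beta⟩
      · simp only [Tm.subst, if_neg hy]; exact ⟨_, Step.beta⟩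
  | @ifT u' v => exact ⟨_, Step.ifT⟩
  | @ifF u' v => exact ⟨_, Step.ifF⟩
  | @lamC y t' t'' h ih =>
      by_cases hy : y = x
      · simp only [Tm.subst, if_pos hy]
        exact ⟨_, Step.lamC h⟩
      · simp only [Tm.subst, if_neg hy]
        obtain ⟨w, hw⟩ := ih
        exact ⟨_, Step.lamC hw⟩
  | appL h ih => obtain ⟨w, hw⟩ := ih; exact ⟨_, Step.appL hw⟩
  | appR h ih => obtain ⟨w, hw⟩ := ih; exact ⟨_, Step.appR hw⟩
  | ite0 h ih => obtain ⟨w, hw⟩ := ih; exact ⟨_, Step.ite0 hw⟩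
  | ite1 h ih => obtain ⟨w, hw⟩ := ih; exact ⟨_, Step.ite1 hw⟩
  | ite2 h ih => obtain ⟨w, hw⟩ := ih; exact ⟨_, Step.ite2 hw⟩

lemma nf_subst_rev {t : Tm} {x : ℕ} {u : Tm} (h : NFt (t.subst x u)) : NFt t :=
  fun s hs => by obtain ⟨w, hw⟩ := step_subst hs x u; exact h w hw

lemma nf_app_left {a b : Tm} (h : NFt (.app a b)) : NFt a :=
  fun s hs => h _ (Step.appL hs)

lemma nf_ite_cond {a b c : Tm} (h : NFt (.ite a b c)) : NFt a :=
  fun s hs => h _ (Step.ite0 hs)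

lemma subst_var_self (x : ℕ) (u : Tm) : (Tm.var x).subst x u = u := by
  simp [Tm.subst]

lemma subst_app_var (x : ℕ) (s u : Tm) :
    (Tm.app (.var x) s).subst x u = .app u (s.subst x u) := by
  simp [Tm.subst]

lemma subst_lam_self (x : ℕ) (s u : Tm) : (Tm.lam x s).subst x u = .lam x s := by
  simp [Tm.subst]

lemma subst_ite_var (x : ℕ) (b c u : Tm) :
    (Tm.ite (.var x) b c).subst x u = .ite u (b.subst x u) (c.subst x u) := by
  simp [Tm.subst]


lemma step_in_subst {t : Tm} {x : ℕ} (hx : x ∈ t.fv) {u u' : Tm} (hu : Step u u') :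
    ∃ w, Step (t.subst x u) w := by
  induction t with
  | var y =>
      simp only [Tm.fv, Finset.mem_singleton, Finset.mem_union, Finset.mem_sdiff, Finset.notMem_empty] at hx
      subst hx
      exact ⟨u', by simpa [Tm.subst] using hu⟩
  | tt => exact absurd hx (by simp [Tm.fv])
  | ff => exact absurd hx (by simp [Tm.fv])
  | lam y s ih =>
      simp only [Tm.fv, Finset.mem_singleton, Finset.mem_union, Finset.mem_sdiff, Finset.notMem_empty] at hx
      obtain ⟨h1, h2⟩ := hx
      have hy : y ≠ x := fun h => h2 (h ▸ rfl)
      obtain ⟨w, hw⟩ := ih h1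
      exact ⟨_, by simp only [Tm.subst, if_neg hy]; exact Step.lamC hw⟩
  | app a b iha ihb =>
      simp only [Tm.fv, Finset.mem_singleton, Finset.mem_union, Finset.mem_sdiff, Finset.notMem_empty] at hx
      rcases hx with hx | hx
      · obtain ⟨w, hw⟩ := iha hx; exact ⟨_, Step.appL hw⟩
      · obtain ⟨w, hw⟩ := ihb hx; exact ⟨_, Step.appR hw⟩
  | ite a b c iha ihb ihc =>
      simp only [Tm.fv, Finset.mem_singleton, Finset.mem_union, Finset.mem_sdiff, Finset.notMem_empty] at hx
      rcases hx with (hx | hx) | hx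
      · obtain ⟨w, hw⟩ := iha hx; exact ⟨_, Step.ite0 hw⟩
      · obtain ⟨w, hw⟩ := ihb hx; exact ⟨_, Step.ite1 hw⟩
      · obtain ⟨w, hw⟩ := ihc hx; exact ⟨_, Step.ite2 hw⟩

lemma nf_subst_arg {t : Tm} {x : ℕ} {u : Tm} (hx : x ∈ t.fv) (h : NFt (t.subst x u)) :
    NFt u :=
  fun u' hu => by obtain ⟨w, hw⟩ := step_in_subst hx hu; exact h w hw

lemma subst_fv_mem {t u : Tm} {x a : ℕ} (h : a ∈ (t.subst x u).fv) :
    (a ∈ t.fv ∧ a ≠ x) ∨ a ∈ u.fv := by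
  induction t with
  | var y =>
      by_cases hy : y = x
      · subst hy
        rw [subst_var_self] at h
        exact Or.inr h
      · simp only [Tm.subst, if_neg hy, Tm.fv, Finset.mem_singleton] at h
        subst h
        exact Or.inl ⟨by simp [Tm.fv], hy⟩
  | tt => simp [Tm.subst, Tm.fv] at h
  | ff => simp [Tm.subst, Tm.fv] at h
  | lam y s ih =>
      by_cases hy : y = x
      · subst hy
        rw [subst_lam_self] at h
        simp only [Tm.fv, Finset.mem_sdiff, Finset.mem_singleton] at h ⊢
        exact Or.inl ⟨h, h.2⟩
      · simp only [Tm.subst, if_neg hy, Tm.fv, Finset.mem_sdiff,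
          Finset.mem_singleton] at h ⊢
        obtain ⟨h1, h2⟩ := h
        rcases ih h1 with ⟨h3, h4⟩ | h3
        · exact Or.inl ⟨⟨h3, h2⟩, h4⟩
        · exact Or.inr h3
  | app a' b iha ihb =>
      simp only [Tm.subst, Tm.fv, Finset.mem_union] at h ⊢
      rcases h with h | h
      · rcases iha h with ⟨h1, h2⟩ | h1
        · exact Or.inl ⟨Or.inl h1, h2⟩
        · exact Or.inr h1
      · rcases ihb h with ⟨h1, h2⟩ | h1
        · exact Or.inl ⟨Or.inr h1, h2⟩
        · exact Or.inr h1
  | ite a' b c iha ihb ihc =>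
      simp only [Tm.subst, Tm.fv, Finset.mem_union] at h ⊢
      rcases h with (h | h) | h
      · rcases iha h with ⟨h1, h2⟩ | h1
        · exact Or.inl ⟨Or.inl (Or.inl h1), h2⟩
        · exact Or.inr h1
      · rcases ihb h with ⟨h1, h2⟩ | h1
        · exact Or.inl ⟨Or.inl (Or.inr h1), h2⟩
        · exact Or.inr h1
      · rcases ihc h with ⟨h1, h2⟩ | h1
        · exact Or.inl ⟨Or.inr h1, h2⟩
        · exact Or.inr h1

/-- the head (leftmost via app-left/ite-cond) of t is the variable z,
and z is applied at the bottom. -/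

inductive AHV : Tm → ℕ → Prop
  | base (z : ℕ) (s : Tm) : AHV (.app (.var z) s) z
  | app {t : Tm} {z : ℕ} (s : Tm) : AHV t z → AHV (.app t s) z
  | ite {a : Tm} {z : ℕ} (b c : Tm) : AHV a z → AHV (.ite a b c) z

/-- the head of t is the variable z, directly in if-condition position. -/
inductive CHV : Tm → ℕ → Prop
  | base (z : ℕ) (b c : Tm) : CHV (.ite (.var z) b c) z
  | app {t : Tm} {z : ℕ} (s : Tm) : CHV t z → CHV (.app t s) z
  | ite {a : Tm} {z : ℕ} (b c : Tm) : CHV a z → CHV (.ite a b c) z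

def HeadV (t : Tm) (z : ℕ) : Prop := t = .var z ∨ AHV t z ∨ CHV t z

lemma ahv_fv {t : Tm} {z : ℕ} (h : AHV t z) : z ∈ t.fv := by
  induction h <;> simp [Tm.fv] <;> tauto

lemma chv_fv {t : Tm} {z : ℕ} (h : CHV t z) : z ∈ t.fv := by
  induction h <;> simp [Tm.fv] <;> tauto

lemma headv_fv {t : Tm} {z : ℕ} (h : HeadV t z) : z ∈ t.fv := by
  rcases h with h | h | h
  · subst h; simp [Tm.fv]
  · exact ahv_fv h
  · exact chv_fv h

lemma headv_app {a b : Tm} {z : ℕ} (h : HeadV a z) : HeadV (.app a b) z := by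
  rcases h with h | h | h
  · subst h; exact Or.inr (Or.inl (AHV.base _ _))
  · exact Or.inr (Or.inl (AHV.app _ h))
  · exact Or.inr (Or.inr (CHV.app _ h))

lemma headv_ite {a b c : Tm} {z : ℕ} (h : HeadV a z) : HeadV (.ite a b c) z := by
  rcases h with h | h | h
  · subst h; exact Or.inr (Or.inr (CHV.base _ _ _))
  · exact Or.inr (Or.inl (AHV.ite _ _ h))
  · exact Or.inr (Or.inr (CHV.ite _ _ h))

lemma ahv_subst_ne {t : Tm} {z x : ℕ} {u : Tm} (h : AHV t z) (hz : z ≠ x) :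
    AHV (t.subst x u) z := by
  induction h with
  | base z s =>
      simp only [Tm.subst, if_neg hz]
      exact AHV.base _ _
  | app s h ih => exact AHV.app _ (ih hz)
  | ite b c h ih => exact AHV.ite _ _ (ih hz)

lemma chv_subst_ne {t : Tm} {z x : ℕ} {u : Tm} (h : CHV t z) (hz : z ≠ x) :
    CHV (t.subst x u) z := by
  induction h with
  | base z b c =>
      simp only [Tm.subst, if_neg hz]
      exact CHV.base _ _ _
  | app s h ih => exact CHV.app _ (ih hz)
  | ite b c h ih => exact CHV.ite _ _ (ih hz)

lemma ahv_subst_var {t : Tm} {x z : ℕ} (h : AHV t x) :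
    AHV (t.subst x (.var z)) z := by
  induction h with
  | base x s => rw [subst_app_var]; exact AHV.base _ _
  | app s h ih => exact AHV.app _ ih
  | ite b c h ih => exact AHV.ite _ _ ih

lemma chv_subst_var {t : Tm} {x z : ℕ} (h : CHV t x) :
    CHV (t.subst x (.var z)) z := by
  induction h with
  | base x b c => rw [subst_ite_var]; exact CHV.base _ _ _
  | app s h ih => exact CHV.app _ ih
  | ite b c h ih => exact CHV.ite _ _ ih

lemma ahv_subst_of_ahv {t u : Tm} {x z : ℕ} (ht : AHV t x) (hu : AHV u z) :
    AHV (t.subst x u) z := by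
  induction ht with
  | base x s => rw [subst_app_var]; exact AHV.app _ hu
  | app s h ih => exact AHV.app _ ih
  | ite b c h ih => exact AHV.ite _ _ ih

lemma chv_subst_of_ahv {t u : Tm} {x z : ℕ} (ht : AHV t x) (hu : CHV u z) :
    CHV (t.subst x u) z := by
  induction ht with
  | base x s => rw [subst_app_var]; exact CHV.app _ hu
  | app s h ih => exact CHV.app _ ih
  | ite b c h ih => exact CHV.ite _ _ ih

lemma ahv_subst_of_chv {t u : Tm} {x z : ℕ} (ht : CHV t x) (hu : AHV u z) :
    AHV (t.subst x u) z := by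
  induction ht with
  | base x b c => rw [subst_ite_var]; exact AHV.ite _ _ hu
  | app s h ih => exact AHV.app _ ih
  | ite b c h ih => exact AHV.ite _ _ ih

lemma chv_subst_of_chv {t u : Tm} {x z : ℕ} (ht : CHV t x) (hu : CHV u z) :
    CHV (t.subst x u) z := by
  induction ht with
  | base x b c => rw [subst_ite_var]; exact CHV.ite _ _ hu
  | app s h ih => exact CHV.app _ ih
  | ite b c h ih => exact CHV.ite _ _ ih

lemma headv_splice {t u : Tm} {x z : ℕ} (ht : HeadV t x) (hu : HeadV u z) :
    HeadV (t.subst x u) z := by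
  rcases ht with ht | ht | ht
  · subst ht; rw [subst_var_self]; exact hu
  · rcases hu with hu | hu | hu
    · subst hu; exact Or.inr (Or.inl (ahv_subst_var ht))
    · exact Or.inr (Or.inl (ahv_subst_of_ahv ht hu))
    · exact Or.inr (Or.inr (chv_subst_of_ahv ht hu))
  · rcases hu with hu | hu | hu
    · subst hu; exact Or.inr (Or.inr (chv_subst_var ht))
    · exact Or.inr (Or.inl (ahv_subst_of_chv ht hu))
    · exact Or.inr (Or.inr (chv_subst_of_chv ht hu))

lemma ahv_step_lam {t : Tm} {x y : ℕ} {s : Tm} (h : AHV t x) :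
    ∃ w, Step (t.subst x (.lam y s)) w := by
  induction h with
  | base x s' => rw [subst_app_var]; exact ⟨_, Step.beta⟩
  | app s' h ih => obtain ⟨w, hw⟩ := ih; exact ⟨_, Step.appL hw⟩
  | ite b c h ih => obtain ⟨w, hw⟩ := ih; exact ⟨_, Step.ite0 hw⟩

lemma chv_step_bool {t : Tm} {x : ℕ} {u : Tm} (h : CHV t x) (hu : u = .tt ∨ u = .ff) :
    ∃ w, Step (t.subst x u) w := by
  induction h with
  | base x b c =>
      rw [subst_ite_var]
      rcases hu with hu | hu <;> subst hu
      · exact ⟨_, Step.ifT⟩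
      · exact ⟨_, Step.ifF⟩
  | app s h ih => obtain ⟨w, hw⟩ := ih; exact ⟨_, Step.appL hw⟩
  | ite b c h ih => obtain ⟨w, hw⟩ := ih; exact ⟨_, Step.ite0 hw⟩

lemma subst_eq_var {t u : Tm} {x z : ℕ} (h : t.subst x u = .var z) :
    (t = .var z ∧ z ≠ x) ∨ (t = .var x ∧ u = .var z) := by
  cases t with
  | var y =>
      by_cases hy : y = x
      · subst hy; rw [subst_var_self] at h
        exact Or.inr ⟨rfl, h⟩
      · simp only [Tm.subst, if_neg hy] at h
        injection h with h'
        subst h'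
        exact Or.inl ⟨rfl, hy⟩
  | tt => simp [Tm.subst] at h
  | ff => simp [Tm.subst] at h
  | lam y s => by_cases hy : y = x <;> simp [Tm.subst, hy] at h
  | app a b => simp [Tm.subst] at h
  | ite a b c => simp [Tm.subst] at h

lemma subst_eq_tt {t u : Tm} {x : ℕ} (h : t.subst x u = .tt) :
    t = .tt ∨ (t = .var x ∧ u = .tt) := by
  cases t with
  | var y =>
      by_cases hy : y = x
      · subst hy; rw [subst_var_self] at h
        exact Or.inr ⟨rfl, h⟩
      · simp [Tm.subst, hy] at h
  | tt => exact Or.inl rfl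
  | ff => simp [Tm.subst] at h
  | lam y s => by_cases hy : y = x <;> simp [Tm.subst, hy] at h
  | app a b => simp [Tm.subst] at h
  | ite a b c => simp [Tm.subst] at h

lemma subst_eq_ff {t u : Tm} {x : ℕ} (h : t.subst x u = .ff) :
    t = .ff ∨ (t = .var x ∧ u = .ff) := by
  cases t with
  | var y =>
      by_cases hy : y = x
      · subst hy; rw [subst_var_self] at h
        exact Or.inr ⟨rfl, h⟩
      · simp [Tm.subst, hy] at h
  | ff => exact Or.inl rfl
  | tt => simp [Tm.subst] at h
  | lam y s => by_cases hy : y = x <;> simp [Tm.subst, hy] at h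
  | app a b => simp [Tm.subst] at h
  | ite a b c => simp [Tm.subst] at h

lemma subst_eq_lam {t u : Tm} {x y : ℕ} {s : Tm} (h : t.subst x u = .lam y s) :
    (∃ s₀, t = .lam y s₀) ∨ (t = .var x ∧ u = .lam y s) := by
  cases t with
  | var y' =>
      by_cases hy : y' = x
      · subst hy; rw [subst_var_self] at h
        exact Or.inr ⟨rfl, h⟩
      · simp [Tm.subst, hy] at h
  | tt => simp [Tm.subst] at h
  | ff => simp [Tm.subst] at h
  | lam y' s' =>
      by_cases hy : y' = x
      · simp only [Tm.subst, if_pos hy] at h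
        injection h with h1 h2
        subst h1
        exact Or.inl ⟨s', rfl⟩
      · simp only [Tm.subst, if_neg hy] at h
        injection h with h1 h2
        subst h1
        exact Or.inl ⟨s', rfl⟩
  | app a b => simp [Tm.subst] at h
  | ite a b c => simp [Tm.subst] at h

lemma ahv_subst_inv_aux {u : Tm} {x z : ℕ} {w : Tm} (h : AHV w z) :
    ∀ t : Tm, t.subst x u = w →
      (z ≠ x ∧ AHV t z) ∨ (HeadV t x ∧ AHV u z) ∨ (AHV t x ∧ u = .var z) := by
  induction h with
  | base z s =>
      intro t hw
      cases t with
      | var y =>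
          by_cases hy : y = x
          · subst hy; rw [subst_var_self] at hw
            exact Or.inr (Or.inl ⟨Or.inl rfl, by rw [hw]; exact AHV.base _ _⟩)
          · simp [Tm.subst, hy] at hw
      | app a b =>
          simp only [Tm.subst] at hw
          injection hw with hw1 hw2
          rcases subst_eq_var hw1 with ⟨ha, hzx⟩ | ⟨ha, hu⟩
          · subst ha; exact Or.inl ⟨hzx, AHV.base _ _⟩
          · subst ha; exact Or.inr (Or.inr ⟨AHV.base _ _, hu⟩)
      | tt => simp [Tm.subst] at hw
      | ff => simp [Tm.subst] at hw
      | lam y s' => by_cases hy : y = x <;> simp [Tm.subst, hy] at hw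
      | ite a b c => simp [Tm.subst] at hw
  | app s h' ih =>
      intro t hw
      cases t with
      | var y =>
          by_cases hy : y = x
          · subst hy; rw [subst_var_self] at hw
            exact Or.inr (Or.inl ⟨Or.inl rfl, by rw [hw]; exact AHV.app _ h'⟩)
          · simp [Tm.subst, hy] at hw
      | app a b =>
          simp only [Tm.subst] at hw
          injection hw with hw1 hw2
          rcases ih a hw1 with ⟨hzx, hA⟩ | ⟨hH, hA⟩ | ⟨hA, hu⟩
          · exact Or.inl ⟨hzx, AHV.app _ hA⟩
          · exact Or.inr (Or.inl ⟨headv_app hH, hA⟩)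
          · exact Or.inr (Or.inr ⟨AHV.app _ hA, hu⟩)
      | tt => simp [Tm.subst] at hw
      | ff => simp [Tm.subst] at hw
      | lam y s' => by_cases hy : y = x <;> simp [Tm.subst, hy] at hw
      | ite a b c => simp [Tm.subst] at hw
  | ite b c h' ih =>
      intro t hw
      cases t with
      | var y =>
          by_cases hy : y = x
          · subst hy; rw [subst_var_self] at hw
            exact Or.inr (Or.inl ⟨Or.inl rfl, by rw [hw]; exact AHV.ite _ _ h'⟩)
          · simp [Tm.subst, hy] at hw
      | ite a b₀ c₀ =>
          simp only [Tm.subst] at hw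
          injection hw with hw1 hw2 hw3
          rcases ih a hw1 with ⟨hzx, hA⟩ | ⟨hH, hA⟩ | ⟨hA, hu⟩
          · exact Or.inl ⟨hzx, AHV.ite _ _ hA⟩
          · exact Or.inr (Or.inl ⟨headv_ite hH, hA⟩)
          · exact Or.inr (Or.inr ⟨AHV.ite _ _ hA, hu⟩)
      | tt => simp [Tm.subst] at hw
      | ff => simp [Tm.subst] at hw
      | lam y s' => by_cases hy : y = x <;> simp [Tm.subst, hy] at hw
      | app a b => simp [Tm.subst] at hw

lemma ahv_subst_inv {t u : Tm} {x z : ℕ} (h : AHV (t.subst x u) z) :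
    (z ≠ x ∧ AHV t z) ∨ (HeadV t x ∧ AHV u z) ∨ (AHV t x ∧ u = .var z) :=
  ahv_subst_inv_aux h t rfl

lemma chv_subst_inv_aux {u : Tm} {x z : ℕ} {w : Tm} (h : CHV w z) :
    ∀ t : Tm, t.subst x u = w →
      (z ≠ x ∧ CHV t z) ∨ (HeadV t x ∧ CHV u z) ∨ (CHV t x ∧ u = .var z) := by
  induction h with
  | base z b c =>
      intro t hw
      cases t with
      | var y =>
          by_cases hy : y = x
          · subst hy; rw [subst_var_self] at hw
            exact Or.inr (Or.inl ⟨Or.inl rfl, by rw [hw]; exact CHV.base _ _ _⟩)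
          · simp [Tm.subst, hy] at hw
      | ite a b₀ c₀ =>
          simp only [Tm.subst] at hw
          injection hw with hw1 hw2 hw3
          rcases subst_eq_var hw1 with ⟨ha, hzx⟩ | ⟨ha, hu⟩
          · subst ha; exact Or.inl ⟨hzx, CHV.base _ _ _⟩
          · subst ha; exact Or.inr (Or.inr ⟨CHV.base _ _ _, hu⟩)
      | tt => simp [Tm.subst] at hw
      | ff => simp [Tm.subst] at hw
      | lam y s' => by_cases hy : y = x <;> simp [Tm.subst, hy] at hw
      | app a b => simp [Tm.subst] at hw
  | app s h' ih =>
      intro t hw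
      cases t with
      | var y =>
          by_cases hy : y = x
          · subst hy; rw [subst_var_self] at hw
            exact Or.inr (Or.inl ⟨Or.inl rfl, by rw [hw]; exact CHV.app _ h'⟩)
          · simp [Tm.subst, hy] at hw
      | app a b =>
          simp only [Tm.subst] at hw
          injection hw with hw1 hw2
          rcases ih a hw1 with ⟨hzx, hA⟩ | ⟨hH, hA⟩ | ⟨hA, hu⟩
          · exact Or.inl ⟨hzx, CHV.app _ hA⟩
          · exact Or.inr (Or.inl ⟨headv_app hH, hA⟩)
          · exact Or.inr (Or.inr ⟨CHV.app _ hA, hu⟩)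
      | tt => simp [Tm.subst] at hw
      | ff => simp [Tm.subst] at hw
      | lam y s' => by_cases hy : y = x <;> simp [Tm.subst, hy] at hw
      | ite a b c => simp [Tm.subst] at hw
  | ite b c h' ih =>
      intro t hw
      cases t with
      | var y =>
          by_cases hy : y = x
          · subst hy; rw [subst_var_self] at hw
            exact Or.inr (Or.inl ⟨Or.inl rfl, by rw [hw]; exact CHV.ite _ _ h'⟩)
          · simp [Tm.subst, hy] at hw
      | ite a b₀ c₀ =>
          simp only [Tm.subst] at hw
          injection hw with hw1 hw2 hw3
          rcases ih a hw1 with ⟨hzx, hA⟩ | ⟨hH, hA⟩ | ⟨hA, hu⟩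
          · exact Or.inl ⟨hzx, CHV.ite _ _ hA⟩
          · exact Or.inr (Or.inl ⟨headv_ite hH, hA⟩)
          · exact Or.inr (Or.inr ⟨CHV.ite _ _ hA, hu⟩)
      | tt => simp [Tm.subst] at hw
      | ff => simp [Tm.subst] at hw
      | lam y s' => by_cases hy : y = x <;> simp [Tm.subst, hy] at hw
      | app a b => simp [Tm.subst] at hw

lemma chv_subst_inv {t u : Tm} {x z : ℕ} (h : CHV (t.subst x u) z) :
    (z ≠ x ∧ CHV t z) ∨ (HeadV t x ∧ CHV u z) ∨ (CHV t x ∧ u = .var z) :=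
  chv_subst_inv_aux h t rfl

lemma ctxDom_nil : ctxDom ([] : Ctx) = ∅ := rfl

lemma ctxDom_cons (x : ℕ) (A : Ty) (Γ : Ctx) :
    ctxDom ((x, A) :: Γ) = insert x (ctxDom Γ) := by
  simp [ctxDom]

lemma ctxDom_append (Γ₁ Γ₂ : Ctx) :
    ctxDom (Γ₁ ++ Γ₂) = ctxDom Γ₁ ∪ ctxDom Γ₂ := by
  simp [ctxDom]

lemma ctxDom_para (Δ : Ctx) : ctxDom (paraCtx Δ) = ctxDom Δ := by
  induction Δ with
  | nil => rfl
  | cons p Δ ih =>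
      simp only [paraCtx, ctxDom, List.map_cons, List.toFinset_cons] at ih ⊢
      rw [ih]

set_option maxHeartbeats 1600000 in
/-- Master lemma: free variables are bound by the context, and (for judgments
with empty non-linear zone) booleans only have bool-spine types, abstractions
only have arrow-spine types, the first context entry governs head variables,
and normal terms are booleans, abstractions or have a variable head. -/
theorem master {Γ Δ : Ctx} {t : Tm} {A : Ty} {d : ℕ} (h : DerD Γ Δ t A d) :
    (t.fv ⊆ ctxDom Γ ∪ ctxDom Δ) ∧
    (Γ = [] →
      ((∀ z, t = .var z → ∃ C Δ', Δ = (z, C) :: Δ' ∧ (cls A = cls C ∨ cls C = 2)) ∧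
       ((t = .tt ∨ t = .ff) → cls A = 0) ∧
       ((∃ y s, t = .lam y s) → cls A = 1) ∧
       (NFt t → (t = .tt ∨ t = .ff ∨ (∃ y s, t = .lam y s) ∨ ∃ z, HeadV t z)) ∧
       (∀ z, NFt t → AHV t z → ∃ C Δ', Δ = (z, C) :: Δ' ∧ (cls C = 1 ∨ cls C = 2)) ∧
       (∀ z, NFt t → CHV t z → ∃ C Δ', Δ = (z, C) :: Δ' ∧ (cls C = 0 ∨ cls C = 2)))) := by
  induction h with
  | @id x A =>
      constructor
      · intro a ha
        simp only [Tm.fv, Finset.mem_singleton] at ha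
        subst ha
        simp [ctxDom_cons, ctxDom_nil]
      · intro _
        refine ⟨?_, ?_, ?_, ?_, ?_, ?_⟩
        · intro z hz
          injection hz with hz
          subst hz
          exact ⟨A, [], rfl, Or.inl rfl⟩
        · rintro (h | h) <;> simp at h
        · rintro ⟨y, s, h⟩; simp at h
        · intro _; exact Or.inr (Or.inr (Or.inr ⟨x, Or.inl rfl⟩))
        · intro z _ hA; cases hA
        · intro z _ hC; cases hC
  | @lolliI Γ Δ x A B t d h ih =>
      constructor
      · intro a ha
        simp only [Tm.fv, Finset.mem_sdiff, Finset.mem_singleton] at ha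
        have h' := ih.1 ha.1
        simp only [ctxDom_cons, Finset.mem_union, Finset.mem_insert] at h' ⊢
        rcases h' with h' | (h' | h')
        · exact Or.inl h'
        · exact absurd h' ha.2
        · exact Or.inr h'
      · intro _
        refine ⟨?_, ?_, ?_, ?_, ?_, ?_⟩
        · intro z hz; simp at hz
        · rintro (h | h) <;> simp at h
        · intro _; simp [cls]
        · intro _; exact Or.inr (Or.inr (Or.inl ⟨x, t, rfl⟩))
        · intro z _ hA; cases hA
        · intro z _ hC; cases hC
  | @arrI Γ Δ x A B t d h ih =>
      constructor
      · intro a ha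
        simp only [Tm.fv, Finset.mem_sdiff, Finset.mem_singleton] at ha
        have h' := ih.1 ha.1
        simp only [ctxDom_cons, Finset.mem_union, Finset.mem_insert] at h' ⊢
        rcases h' with (h' | h') | h'
        · exact absurd h' ha.2
        · exact Or.inl h'
        · exact Or.inr h'
      · intro _
        refine ⟨?_, ?_, ?_, ?_, ?_, ?_⟩
        · intro z hz; simp at hz
        · rintro (h | h) <;> simp at h
        · intro _; simp [cls]
        · intro _; exact Or.inr (Or.inr (Or.inl ⟨x, t, rfl⟩))
        · intro z _ hA; cases hA
        · intro z _ hC; cases hC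
  | @lolliE Γ₁ Γ₂ Δ₁ Δ₂ A B t u d₁ d₂ h₁ h₂ ih₁ ih₂ =>
      constructor
      · intro a ha
        simp only [Tm.fv, Finset.mem_union] at ha
        rcases ha with ha | ha
        · have h' := ih₁.1 ha
          simp only [ctxDom_append, Finset.mem_union] at h' ⊢
          tauto
        · have h' := ih₂.1 ha
          simp only [ctxDom_append, Finset.mem_union] at h' ⊢
          tauto
      · intro hΓ
        obtain ⟨hΓ₁, hΓ₂⟩ := List.append_eq_nil_iff.mp hΓ
        have F₁ := ih₁.2 hΓ₁
        refine ⟨?_, ?_, ?_, ?_, ?_, ?_⟩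
        · intro z hz; simp at hz
        · rintro (h | h) <;> simp at h
        · rintro ⟨y, s, h⟩; simp at h
        · intro hNF
          have hNFt : NFt t := nf_app_left hNF
          rcases F₁.2.2.2.1 hNFt with h' | h' | ⟨y, s, h'⟩ | ⟨z, hz⟩
          · have := F₁.2.1 (Or.inl h'); simp [cls] at this
          · have := F₁.2.1 (Or.inr h'); simp [cls] at this
          · subst h'; exact (hNF _ Step.beta).elim
          · exact Or.inr (Or.inr (Or.inr ⟨z, headv_app hz⟩))
        · intro z hNF hA
          cases hA with
          | base =>
              obtain ⟨C, Δ', heq, hC⟩ := F₁.1 z rfl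
              refine ⟨C, Δ' ++ Δ₂, by rw [heq]; rfl, ?_⟩
              simp only [cls] at hC
              rcases hC with hC | hC
              · exact Or.inl hC.symm
              · exact Or.inr hC
          | app s hA' =>
              obtain ⟨C, Δ', heq, hC⟩ := F₁.2.2.2.2.1 z (nf_app_left hNF) hA'
              exact ⟨C, Δ' ++ Δ₂, by rw [heq]; rfl, hC⟩
        · intro z hNF hC
          cases hC with
          | app s hC' =>
              obtain ⟨C, Δ', heq, hC⟩ := F₁.2.2.2.2.2 z (nf_app_left hNF) hC'
              exact ⟨C, Δ' ++ Δ₂, by rw [heq]; rfl, hC⟩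
  | @arrE Γ Δ z A B C t u d₁ d₂ h₁ h₂ ih₁ ih₂ =>
      refine ⟨?_, fun hΓ => absurd hΓ (by simp)⟩
      intro a ha
      simp only [Tm.fv, Finset.mem_union] at ha
      rcases ha with ha | ha
      · have h' := ih₁.1 ha
        simp only [ctxDom_cons, Finset.mem_union, Finset.mem_insert] at h' ⊢
        tauto
      · have h' := ih₂.1 ha
        simp only [ctxDom_cons, ctxDom_nil, Finset.mem_union, Finset.mem_insert,
          Finset.notMem_empty] at h' ⊢
        tauto
  | @arrE' Γ Δ A B t u d₁ d₂ h₁ h₂ ih₁ ih₂ =>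
      constructor
      · intro a ha
        simp only [Tm.fv, Finset.mem_union] at ha
        rcases ha with ha | ha
        · exact ih₁.1 ha
        · have h' := ih₂.1 ha
          simp [ctxDom_nil] at h'
      · intro hΓ
        have F₁ := ih₁.2 hΓ
        refine ⟨?_, ?_, ?_, ?_, ?_, ?_⟩
        · intro z hz; simp at hz
        · rintro (h | h) <;> simp at h
        · rintro ⟨y, s, h⟩; simp at h
        · intro hNF
          have hNFt : NFt t := nf_app_left hNF
          rcases F₁.2.2.2.1 hNFt with h' | h' | ⟨y, s, h'⟩ | ⟨z, hz⟩
          · have := F₁.2.1 (Or.inl h'); simp [cls] at this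
          · have := F₁.2.1 (Or.inr h'); simp [cls] at this
          · subst h'; exact (hNF _ Step.beta).elim
          · exact Or.inr (Or.inr (Or.inr ⟨z, headv_app hz⟩))
        · intro z hNF hA
          cases hA with
          | base =>
              obtain ⟨C, Δ', heq, hC⟩ := F₁.1 z rfl
              refine ⟨C, Δ', heq, ?_⟩
              simp only [cls] at hC
              rcases hC with hC | hC
              · exact Or.inl hC.symm
              · exact Or.inr hC
          | app s hA' =>
              exact F₁.2.2.2.2.1 z (nf_app_left hNF) hA'
        · intro z hNF hC
          cases hC with
          | app s hC' => exact F₁.2.2.2.2.2 z (nf_app_left hNF) hC'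
  | @weak Γ₁ Γ₂ Δ₁ Δ₂ A t d h ih =>
      constructor
      · intro a ha
        have h' := ih.1 ha
        simp only [ctxDom_append, Finset.mem_union] at h' ⊢
        tauto
      · intro hΓ
        obtain ⟨hΓ₁, hΓ₂⟩ := List.append_eq_nil_iff.mp hΓ
        have F := ih.2 hΓ₁
        refine ⟨?_, ?_, ?_, ?_, ?_, ?_⟩
        · intro z hz
          obtain ⟨C, Δ', heq, hC⟩ := F.1 z hz
          exact ⟨C, Δ' ++ Δ₂, by rw [heq]; rfl, hC⟩
        · exact F.2.1
        · exact F.2.2.1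
        · exact F.2.2.2.1
        · intro z hNF hA
          obtain ⟨C, Δ', heq, hC⟩ := F.2.2.2.2.1 z hNF hA
          exact ⟨C, Δ' ++ Δ₂, by rw [heq]; rfl, hC⟩
        · intro z hNF hC
          obtain ⟨C, Δ', heq, hC⟩ := F.2.2.2.2.2 z hNF hC
          exact ⟨C, Δ' ++ Δ₂, by rw [heq]; rfl, hC⟩
  | @cntr Γ Δ x x₁ x₂ A B t d h ih =>
      refine ⟨?_, fun hΓ => absurd hΓ (by simp)⟩
      intro a ha
      rcases subst_fv_mem ha with ⟨ha1, hax2⟩ | ha1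
      · rcases subst_fv_mem ha1 with ⟨ha0, hax1⟩ | ha0
        · have h' := ih.1 ha0
          simp only [ctxDom_cons, Finset.mem_union, Finset.mem_insert] at h' ⊢
          tauto
        · simp only [Tm.fv, Finset.mem_singleton] at ha0
          subst ha0
          simp [ctxDom_cons]
      · simp only [Tm.fv, Finset.mem_singleton] at ha1
        subst ha1
        simp [ctxDom_cons]
  | @paraI Γ Δ A t d h ih =>
      constructor
      · intro a ha
        have h' := ih.1 ha
        simp only [ctxDom_nil, ctxDom_append, ctxDom_para, Finset.mem_union,
          Finset.notMem_empty] at h' ⊢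
        tauto
      · intro hΓ
        subst hΓ
        have F := ih.2 rfl
        simp only [List.nil_append] at F
        refine ⟨?_, ?_, ?_, ?_, ?_, ?_⟩
        · intro z hz
          obtain ⟨C, Δ', heq, hC⟩ := F.1 z hz
          refine ⟨.para C, paraCtx Δ', by rw [heq]; rfl, ?_⟩
          simp only [cls]
          exact hC
        · intro hs
          have := F.2.1 hs
          simpa [cls] using this
        · intro hs
          have := F.2.2.1 hs
          simpa [cls] using this
        · exact F.2.2.2.1
        · intro z hNF hA
          obtain ⟨C, Δ', heq, hC⟩ := F.2.2.2.2.1 z hNF hA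
          refine ⟨.para C, paraCtx Δ', by rw [heq]; rfl, ?_⟩
          simpa only [cls] using hC
        · intro z hNF hC
          obtain ⟨C, Δ', heq, hC⟩ := F.2.2.2.2.2 z hNF hC
          refine ⟨.para C, paraCtx Δ', by rw [heq]; rfl, ?_⟩
          simpa only [cls] using hC
  | @allI Γ Δ a A t d h hfv ih =>
      refine ⟨ih.1, ?_⟩
      intro hΓ
      have F := ih.2 hΓ
      refine ⟨?_, ?_, ?_, F.2.2.2.1, F.2.2.2.2.1, F.2.2.2.2.2⟩
      · intro z hz
        obtain ⟨C, Δ', heq, hC⟩ := F.1 z hz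
        refine ⟨C, Δ', heq, ?_⟩
        simpa only [cls] using hC
      · intro hs
        have := F.2.1 hs
        simpa only [cls] using this
      · intro hs
        have := F.2.2.1 hs
        simpa only [cls] using this
  | @allE Γ Δ a A B t d h ih =>
      refine ⟨ih.1, ?_⟩
      intro hΓ
      have F := ih.2 hΓ
      refine ⟨?_, ?_, ?_, F.2.2.2.1, F.2.2.2.2.1, F.2.2.2.2.2⟩
      · intro z hz
        obtain ⟨C, Δ', heq, hC⟩ := F.1 z hz
        refine ⟨C, Δ', heq, ?_⟩
        simp only [cls] at hC
        rcases hC with hC | hC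
        · by_cases h2 : cls A = 2
          · exact Or.inr (hC ▸ h2)
          · exact Or.inl (by rw [cls_substTy a B h2]; exact hC)
        · exact Or.inr hC
      · intro hs
        have h0 := F.2.1 hs
        simp only [cls] at h0
        rw [cls_substTy a B (by omega)]
        exact h0
      · intro hs
        have h0 := F.2.2.1 hs
        simp only [cls] at h0
        rw [cls_substTy a B (by omega)]
        exact h0
  | bF =>
      refine ⟨by simp [Tm.fv], ?_⟩
      intro _
      refine ⟨?_, ?_, ?_, ?_, ?_, ?_⟩
      · intro z hz; simp at hz
      · intro _; rfl
      · rintro ⟨y, s, h⟩; simp at h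
      · intro _; exact Or.inr (Or.inl rfl)
      · intro z _ hA; cases hA
      · intro z _ hC; cases hC
  | bT =>
      refine ⟨by simp [Tm.fv], ?_⟩
      intro _
      refine ⟨?_, ?_, ?_, ?_, ?_, ?_⟩
      · intro z hz; simp at hz
      · intro _; rfl
      · rintro ⟨y, s, h⟩; simp at h
      · intro _; exact Or.inl rfl
      · intro z _ hA; cases hA
      · intro z _ hC; cases hC
  | @bE Γ Δ A M₀ M₁ M₂ n d₀ d₁ d₂ h₀ h₁ h₂ ih₀ ih₁ ih₂ =>
      constructor
      · intro a ha
        simp only [Tm.fv, Finset.mem_union] at ha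
        rcases ha with (ha | ha) | ha
        · exact ih₀.1 ha
        · exact ih₁.1 ha
        · exact ih₂.1 ha
      · intro hΓ
        have F₀ := ih₀.2 hΓ
        refine ⟨?_, ?_, ?_, ?_, ?_, ?_⟩
        · intro z hz; simp at hz
        · rintro (h | h) <;> simp at h
        · rintro ⟨y, s, h⟩; simp at h
        · intro hNF
          have hNF₀ : NFt M₀ := nf_ite_cond hNF
          rcases F₀.2.2.2.1 hNF₀ with h' | h' | hl | ⟨z, hz⟩
          · subst h'; exact (hNF _ Step.ifT).elim
          · subst h'; exact (hNF _ Step.ifF).elim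
          · have := F₀.2.2.1 hl
            rw [cls_paraN] at this
            exact absurd this (by omega)
          · exact Or.inr (Or.inr (Or.inr ⟨z, headv_ite hz⟩))
        · intro z hNF hA
          cases hA with
          | ite b c hA' => exact F₀.2.2.2.2.1 z (nf_ite_cond hNF) hA'
        · intro z hNF hC
          cases hC with
          | base =>
              obtain ⟨C, Δ', heq, hC⟩ := F₀.1 z rfl
              refine ⟨C, Δ', heq, ?_⟩
              rw [cls_paraN] at hC
              rcases hC with hC | hC
              · exact Or.inl hC.symm
              · exact Or.inr hC
          | ite b c hC' => exact F₀.2.2.2.2.2 z (nf_ite_cond hNF) hC'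
  | @paraE Γ₁ Γ₂ Δ₁ Δ₂ x A B t u d₁ d₂ h₁ h₂ ih₁ ih₂ =>
      constructor
      · intro a ha
        rcases subst_fv_mem ha with ⟨hat, hax⟩ | hau
        · have h' := ih₂.1 hat
          simp only [ctxDom_append, ctxDom_cons, Finset.mem_union,
            Finset.mem_insert] at h' ⊢
          tauto
        · have h' := ih₁.1 hau
          simp only [ctxDom_append, Finset.mem_union] at h' ⊢
          tauto
      · intro hΓ
        obtain ⟨hΓ₁, hΓ₂⟩ := List.append_eq_nil_iff.mp hΓ
        have F₁ := ih₁.2 hΓ₁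
        have F₂ := ih₂.2 hΓ₂
        refine ⟨?_, ?_, ?_, ?_, ?_, ?_⟩
        · -- P2
          intro z hz
          rcases subst_eq_var hz with ⟨ht, hzx⟩ | ⟨ht, hu⟩
          · obtain ⟨C, Δ', heq, _⟩ := F₂.1 z ht
            injection heq with heq1 _
            rw [Prod.mk.injEq] at heq1
            exact absurd heq1.1.symm hzx
          · obtain ⟨C₂, Δ₂', heq₂, hR₂⟩ := F₂.1 x ht
            injection heq₂ with heq1 _
            rw [Prod.mk.injEq] at heq1
            rw [← heq1.2] at hR₂
            obtain ⟨C, Δ₁', heq₁, hR₁⟩ := F₁.1 z hu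
            refine ⟨C, Δ₁' ++ Δ₂, by rw [heq₁]; rfl, ?_⟩
            rcases hR₁ with hR₁ | hR₁
            · rcases hR₂ with hR₂ | hR₂
              · exact Or.inl (hR₂.trans hR₁)
              · exact Or.inr (hR₁ ▸ hR₂)
            · exact Or.inr hR₁
        · -- P3
          rintro (hs | hs)
          · rcases subst_eq_tt hs with ht | ⟨ht, hu⟩
            · exact F₂.2.1 (Or.inl ht)
            · have h1 := F₁.2.1 (Or.inl hu)
              obtain ⟨C₂, Δ₂', heq₂, hR₂⟩ := F₂.1 x ht
              injection heq₂ with heq1 _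
              rw [Prod.mk.injEq] at heq1
              rw [← heq1.2] at hR₂
              rcases hR₂ with hR₂ | hR₂ <;> omega
          · rcases subst_eq_ff hs with ht | ⟨ht, hu⟩
            · exact F₂.2.1 (Or.inr ht)
            · have h1 := F₁.2.1 (Or.inr hu)
              obtain ⟨C₂, Δ₂', heq₂, hR₂⟩ := F₂.1 x ht
              injection heq₂ with heq1 _
              rw [Prod.mk.injEq] at heq1
              rw [← heq1.2] at hR₂
              rcases hR₂ with hR₂ | hR₂ <;> omega
        · -- P4
          rintro ⟨y, s, hs⟩
          rcases subst_eq_lam hs with ⟨s₀, ht⟩ | ⟨ht, hu⟩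
          · exact F₂.2.2.1 ⟨y, s₀, ht⟩
          · have h1 := F₁.2.2.1 ⟨y, s, hu⟩
            obtain ⟨C₂, Δ₂', heq₂, hR₂⟩ := F₂.1 x ht
            injection heq₂ with heq1 _
            rw [Prod.mk.injEq] at heq1
            rw [← heq1.2] at hR₂
            rcases hR₂ with hR₂ | hR₂ <;> omega
        · -- P5
          intro hNF
          have hNFt : NFt t := nf_subst_rev hNF
          rcases F₂.2.2.2.1 hNFt with ht | ht | ⟨y, s, ht⟩ | ⟨z, hz⟩
          · subst ht; exact Or.inl rfl
          · subst ht; exact Or.inr (Or.inl rfl)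
          · subst ht
            by_cases hyx : y = x
            · exact Or.inr (Or.inr (Or.inl ⟨y, s, by simp only [Tm.subst, if_pos hyx]⟩))
            · exact Or.inr (Or.inr (Or.inl ⟨y, s.subst x u, by
                simp only [Tm.subst, if_neg hyx]⟩))
          · rcases hz with hvar | hA | hC
            · subst hvar
              by_cases hzx : z = x
              · subst hzx
                rw [subst_var_self]
                have hNFu : NFt u := by rwa [subst_var_self] at hNF
                exact F₁.2.2.2.1 hNFu
              · refine Or.inr (Or.inr (Or.inr ⟨z, Or.inl ?_⟩))
                simp only [Tm.subst, if_neg hzx]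
            · by_cases hzx : z = x
              · subst hzx
                have hxfv := ahv_fv hA
                have hNFu : NFt u := nf_subst_arg hxfv hNF
                obtain ⟨C, Δ', heqC, hC⟩ := F₂.2.2.2.2.1 z hNFt hA
                injection heqC with heq1 _
                rw [Prod.mk.injEq] at heq1
                rw [← heq1.2] at hC
                rcases F₁.2.2.2.1 hNFu with hu' | hu' | ⟨y, s, hu'⟩ | ⟨z', hz'⟩
                · have := F₁.2.1 (Or.inl hu'); omega
                · have := F₁.2.1 (Or.inr hu'); omega
                · subst hu'
                  obtain ⟨w, hw⟩ := ahv_step_lam (y := y) (s := s) hA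
                  exact (hNF w hw).elim
                · exact Or.inr (Or.inr (Or.inr
                    ⟨z', headv_splice (Or.inr (Or.inl hA)) hz'⟩))
              · exact Or.inr (Or.inr (Or.inr ⟨z, Or.inr (Or.inl (ahv_subst_ne hA hzx))⟩))
            · by_cases hzx : z = x
              · subst hzx
                have hxfv := chv_fv hC
                have hNFu : NFt u := nf_subst_arg hxfv hNF
                obtain ⟨C, Δ', heqC, hCc⟩ := F₂.2.2.2.2.2 z hNFt hC
                injection heqC with heq1 _
                rw [Prod.mk.injEq] at heq1
                rw [← heq1.2] at hCc
                rcases F₁.2.2.2.1 hNFu with hu' | hu' | ⟨y, s, hu'⟩ | ⟨z', hz'⟩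
                · subst hu'
                  obtain ⟨w, hw⟩ := chv_step_bool hC (Or.inl rfl)
                  exact (hNF w hw).elim
                · subst hu'
                  obtain ⟨w, hw⟩ := chv_step_bool hC (Or.inr rfl)
                  exact (hNF w hw).elim
                · have := F₁.2.2.1 ⟨y, s, hu'⟩; omega
                · exact Or.inr (Or.inr (Or.inr
                    ⟨z', headv_splice (Or.inr (Or.inr hC)) hz'⟩))
              · exact Or.inr (Or.inr (Or.inr ⟨z, Or.inr (Or.inr (chv_subst_ne hC hzx))⟩))
        · -- P6
          intro z hNF hA
          rcases ahv_subst_inv hA with ⟨hzx, hAt⟩ | ⟨hHV, hAu⟩ | ⟨hAt, hu⟩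
          · obtain ⟨C, Δ', heq, _⟩ := F₂.2.2.2.2.1 z (nf_subst_rev hNF) hAt
            injection heq with heq1 _
            rw [Prod.mk.injEq] at heq1
            exact absurd heq1.1.symm hzx
          · have hxfv : x ∈ t.fv := headv_fv hHV
            have hNFu := nf_subst_arg hxfv hNF
            obtain ⟨C, Δ', heq, hC⟩ := F₁.2.2.2.2.1 z hNFu hAu
            exact ⟨C, Δ' ++ Δ₂, by rw [heq]; rfl, hC⟩
          · obtain ⟨C, Δ', heq, hC⟩ := F₁.1 z hu
            obtain ⟨C₂, Δ₂', heq₂, hC₂⟩ := F₂.2.2.2.2.1 x (nf_subst_rev hNF) hAt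
            injection heq₂ with heq1 _
            rw [Prod.mk.injEq] at heq1
            rw [← heq1.2] at hC₂
            refine ⟨C, Δ' ++ Δ₂, by rw [heq]; rfl, ?_⟩
            rcases hC with hC | hC
            · rcases hC₂ with h' | h' <;> omega
            · exact Or.inr hC
        · -- P7
          intro z hNF hC
          rcases chv_subst_inv hC with ⟨hzx, hCt⟩ | ⟨hHV, hCu⟩ | ⟨hCt, hu⟩
          · obtain ⟨C, Δ', heq, _⟩ := F₂.2.2.2.2.2 z (nf_subst_rev hNF) hCt
            injection heq with heq1 _
            rw [Prod.mk.injEq] at heq1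
            exact absurd heq1.1.symm hzx
          · have hxfv : x ∈ t.fv := headv_fv hHV
            have hNFu := nf_subst_arg hxfv hNF
            obtain ⟨C, Δ', heq, hCc⟩ := F₁.2.2.2.2.2 z hNFu hCu
            exact ⟨C, Δ' ++ Δ₂, by rw [heq]; rfl, hCc⟩
          · obtain ⟨C, Δ', heq, hCc⟩ := F₁.1 z hu
            obtain ⟨C₂, Δ₂', heq₂, hC₂⟩ := F₂.2.2.2.2.2 x (nf_subst_rev hNF) hCt
            injection heq₂ with heq1 _
            rw [Prod.mk.injEq] at heq1
            rw [← heq1.2] at hC₂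
            refine ⟨C, Δ' ++ Δ₂, by rw [heq]; rfl, ?_⟩
            rcases hCc with hCc | hCc
            · rcases hC₂ with h' | h' <;> omega
            · exact Or.inr hCc
/-- A closed δβ-normal term of type §ⁿBool is T or F. -/
theorem bool_normal_form (t : Tm) (n : ℕ)
    (h : Der [] [] t (paraN n .bool))
    (hnf : ∀ u : Tm, ¬ Step t u) :
    t = .tt ∨ t = .ff := by
  obtain ⟨d, hD⟩ := h
  have M := master hD
  have F := M.2 rfl
  rcases F.2.2.2.1 hnf with h1 | h1 | hl | ⟨z, h1⟩
  · exact Or.inl h1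
  · exact Or.inr h1
  · have h2 := F.2.2.1 hl
    rw [cls_paraN] at h2
    exact absurd h2 (by omega)
  · have hz := headv_fv h1
    have h3 := M.1 hz
    simp [ctxDom_nil] at h3

end DLALB
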